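/- arXiv:2401.02264 — 3 statements merged into one kernel-verified Lean document; each statement's English description precedes it below -/
import Mathlib

section
/- Let L : C ⊣ R : D be an adjunction between categories C and D admitting pullbacks, and let x be an object of C. Then the induced functor L : C/x → D/L(x) on slice categories admits a right adjoint, given by the composite of R : D/L(x) → C/(R L x) with pullback along the unit η_x : x → R L x. -/
open CategoryTheory CategoryTheory.Limits

theorem stmt_0_general {C : Type*} {D : Type*} [Category C] [Category D]
    [HasPullbacks C]
    (L : C ⥤ D) (R : D ⥤ C) (adj : L ⊣ R) (x : C) :
    Nonempty ((Over.post L : Over x ⥤ Over (L.obj x)) ⊣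
      (Over.post R ⋙ Over.pullback (adj.unit.app x))) :=
  ⟨Over.postAdjunctionLeft adj⟩

/-- Let `L ⊣ R` be an adjunction between categories `C` and `D` admitting
pullbacks, and let `x : C`.  Then the induced functor `L : C/x ⥤ D/L(x)` on slice categories
admits a right adjoint, given by the composite of `R : D/L(x) ⥤ C/(R L x)` with pullback
along the unit `η_x : x ⟶ R L x`. -/
theorem stmt_0 {C : Type*} {D : Type*} [Category C] [Category D]
    [HasPullbacks C] [HasPullbacks D]
    (L : C ⥤ D) (R : D ⥤ C) (adj : L ⊣ R) (x : C) :
    Nonempty ((Over.post L : Over x ⥤ Over (L.obj x)) ⊣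
      (Over.post R ⋙ Over.pullback (adj.unit.app x))) :=
  stmt_0_general L R adj x
end

section
/- Let p : E → [1] be a cocartesian fibration classifying a functor F : C → D, where C and D are the fibers over 0 and 1 respectively. If C and D admit limits of shape J and {s_j}_{j∈J} is a J-shaped diagram of sections of p all of whose structure morphisms s_j(0) → s_j(1) are cocartesian, then the structure morphism lim_j s_j(0) → lim_j s_j(1) of the limit section is cocartesian if and only if the canonical comparison map F(lim_j s_j(0)) → lim_j F(s_j(0)) is an isomorphism (in particular, it is cocartesian whenever F preserves J-limits). -/
open CategoryTheory CategoryTheory.Limits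

/-- A `J`-diagram of sections of the cocartesian fibration classifying `F` is encoded as
`s₀ : J ⥤ C`, `s₁ : J ⥤ D` and `t : s₀ ⋙ F ⟶ s₁`; a section is cocartesian iff its component
of `t` is an isomorphism, and the limit section has structure map `limit.post s₀ F ≫ limMap t`. -/
theorem stmt_5 {J C D : Type*} [Category J] [Category C] [Category D]
    [HasLimitsOfShape J C] [HasLimitsOfShape J D]
    (F : C ⥤ D) (s₀ : J ⥤ C) (s₁ : J ⥤ D) (t : s₀ ⋙ F ⟶ s₁)
    (ht : ∀ j : J, IsIso (t.app j)) :
    (IsIso (limit.post s₀ F ≫ limMap t) ↔ IsIso (limit.post s₀ F)) ∧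
    (Nonempty (PreservesLimitsOfShape J F) → IsIso (limit.post s₀ F ≫ limMap t)) := by
  have : IsIso t := NatIso.isIso_of_isIso_app t
  exact ⟨isIso_comp_right_iff _ (limMap t), fun ⟨_⟩ => inferInstance⟩
end

section
/- Let 𝕃 : X → Y be a functor over a category I between Grothendieck opfibrations encoding a natural transformation η : F ⇒ G of functors I → Cat whose components η_i are left adjoints. Then 𝕃 admits a right adjoint 𝕁 : Y → X over I (the unit and counit lie over the identity of I), given fiberwise by the right adjoints of η_i; moreover 𝕁 preserves cocartesian edges over a morphism f : i → j if and only if the naturality square (η_i, F(f), G(f), η_j) is left adjointable (its Beck–Chevalley transformation F(f) ∘ R_i ⇒ R_j ∘ G(f) is an isomorphism). -/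
/-!
A morphism `(f, φ) : (i, η_i x) ⟶ (j, y)` of `∫G` has fiber `φ : G(f)(η_i x) ⟶ y`; since
`G(f) ∘ η_i = η_j ∘ F(f)`, the adjunction `η_j ⊣ R_j` turns it into `F(f) x ⟶ R_j y`, which is
the fiber of a morphism `(i, x) ⟶ (j, R_j y)` of `∫F` with the same base. This bijection is
natural in the source, so it defines a right adjoint `𝕁 (j, y) = (j, R_j y)` whose unit and
counit have identity bases. Computing `𝕁` on a morphism through the counit shows that its fiber
over `f` is the Beck–Chevalley mate of the naturality square at `f`, followed by `R_j` of the
fiber; on the cocartesian lift of `f` (whose fiber is an identity) only the mate remains.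
-/

open CategoryTheory

universe v u v' u'

-- Unlike `isIso_comp_left_iff`, this needs no instance search, which fails on the unreduced
-- fiber categories of `Grothendieck` morphisms below.
lemma CategoryTheory.isIso_eqToHom_comp_iff {C : Type*} [Category C] {X Y Z : C} (p : X = Y)
    (g : Y ⟶ Z) : IsIso (eqToHom p ≫ g) ↔ IsIso g :=
  isIso_comp_left_iff _ _

namespace CategoryTheory.Grothendieck

variable {I : Type u} [Category.{v} I] {F G : I ⥤ Cat.{v', u'}} {η : F ⟶ G}
  {R : ∀ i : I, G.obj i ⥤ F.obj i} (A : ∀ i : I, (η.app i).toFunctor ⊣ R i)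

def beckChevalley {i j : I} (f : i ⟶ j) :
    TwoSquare (R i) (G.map f).toFunctor (F.map f).toFunctor (R j) :=
  mateEquiv (A i) (A j) (eqToHom (congrArg Cat.Hom.toFunctor (η.naturality f)))

@[simps]
def mapFiberHomEquiv {i j : I} (f : i ⟶ j) (x : F.obj i) (y : G.obj j) :
    ((G.map f).toFunctor.obj ((η.app i).toFunctor.obj x) ⟶ y) ≃
      ((F.map f).toFunctor.obj x ⟶ (R j).obj y) where
  toFun φ := (A j).homEquiv _ _ ((eqToHom (η.naturality f)).toNatTrans.app x ≫ φ)
  invFun ψ := (eqToHom (η.naturality f).symm).toNatTrans.app x ≫ ((A j).homEquiv _ _).symm ψ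
  left_inv φ := by simp
  right_inv ψ := by simp

-- The fiber component of `mapHomEquiv_naturality_left`.
lemma mapFiberHomEquiv_comp {i j k : I} (f : i ⟶ j) (g : j ⟶ k) {x' : F.obj i} {x : F.obj j}
    {y : G.obj k} (u : (F.map f).toFunctor.obj x' ⟶ x)
    (φ : (G.map g).toFunctor.obj ((η.app j).toFunctor.obj x) ⟶ y) :
    mapFiberHomEquiv A (f ≫ g) x' y (eqToHom (by simp) ≫
      (G.map g).toFunctor.map ((eqToHom (η.naturality f).symm).toNatTrans.app x' ≫
        (η.app j).toFunctor.map u) ≫ φ) =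
      eqToHom (by simp) ≫ (F.map g).toFunctor.map u ≫ mapFiberHomEquiv A g x y φ := by
  simp only [mapFiberHomEquiv_apply]
  rw [← Adjunction.homEquiv_naturality_left, ← Adjunction.homEquiv_naturality_left]
  congr 1
  have hu := Functor.congr_hom (congrArg Cat.Hom.toFunctor (η.naturality g)) u
  simp only [Cat.Hom.comp_toFunctor, Functor.comp_map] at hu
  simp [hu, eqToHom_map]

lemma mapFiberHomEquiv_congr_base {i j : I} {f f' : i ⟶ j} (hf : f = f') (x : F.obj i)
    (y : G.obj j) (φ : (G.map f).toFunctor.obj ((η.app i).toFunctor.obj x) ⟶ y) :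
    mapFiberHomEquiv A f x y φ =
      eqToHom (by rw [hf]) ≫ mapFiberHomEquiv A f' x y (eqToHom (by rw [hf]) ≫ φ) := by
  subst hf
  simp

lemma mapFiberHomEquiv_symm_eqToHom (i : I) (y : G.obj i)
    (h : (F.map (𝟙 i)).toFunctor.obj ((R i).obj y) = (R i).obj y) :
    (mapFiberHomEquiv A (𝟙 i) ((R i).obj y) y).symm (eqToHom h) =
      eqToHom (by simp) ≫ (A i).counit.app y := by
  simp [Adjunction.homEquiv_counit, eqToHom_map]

lemma mapFiberHomEquiv_map_counit_comp {i j : I} (f : i ⟶ j) (y : G.obj i) {y' : G.obj j}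
    (φ : (G.map f).toFunctor.obj y ⟶ y') :
    mapFiberHomEquiv A f ((R i).obj y) y' ((G.map f).toFunctor.map ((A i).counit.app y) ≫ φ) =
      (beckChevalley A f).app y ≫ (R j).map φ := by
  simp [beckChevalley, mateEquiv, Adjunction.homEquiv_unit]

def mapHomEquiv (X : Grothendieck F) (Y : Grothendieck G) :
    ((map η).obj X ⟶ Y) ≃ (X ⟶ ⟨Y.base, (R Y.base).obj Y.fiber⟩) where
  toFun g := ⟨g.base, mapFiberHomEquiv A g.base X.fiber Y.fiber g.fiber⟩
  invFun h := ⟨h.base, (mapFiberHomEquiv A h.base X.fiber Y.fiber).symm h.fiber⟩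
  left_inv g := Grothendieck.ext _ _ rfl
    ((Category.id_comp _).trans ((mapFiberHomEquiv A _ _ _).symm_apply_apply g.fiber))
  right_inv h := Grothendieck.ext _ _ rfl
    ((Category.id_comp _).trans ((mapFiberHomEquiv A _ _ _).apply_symm_apply h.fiber))

lemma mapHomEquiv_naturality_left {X' X : Grothendieck F} {Y : Grothendieck G}
    (f : X' ⟶ X) (g : (map η).obj X ⟶ Y) :
    mapHomEquiv A X' Y ((map η).map f ≫ g) = f ≫ mapHomEquiv A X Y g :=
  Grothendieck.ext _ _ rfl
    ((Category.id_comp _).trans (mapFiberHomEquiv_comp A f.base g.base f.fiber g.fiber))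

def mapRightAdjoint : Grothendieck G ⥤ Grothendieck F :=
  Adjunction.rightAdjointOfEquiv (mapHomEquiv A) (fun _ _ _ => mapHomEquiv_naturality_left A)

def mapAdjunction : map η ⊣ mapRightAdjoint A :=
  Adjunction.adjunctionOfEquivRight _ _

lemma mapAdjunction_unit_app_base (X : Grothendieck F) :
    ((mapAdjunction A).unit.app X).base = 𝟙 X.base :=
  rfl

lemma mapAdjunction_counit_app_base (Y : Grothendieck G) :
    ((mapAdjunction A).counit.app Y).base = 𝟙 Y.base :=
  rfl

lemma mapRightAdjoint_map_base {Y Y' : Grothendieck G} (g : Y ⟶ Y') :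
    ((mapRightAdjoint A).map g).base = g.base :=
  Category.id_comp g.base

lemma mapRightAdjoint_comp_forget : mapRightAdjoint A ⋙ forget F = forget G :=
  Functor.ext (fun _ => rfl) fun _ _ g =>
    (mapRightAdjoint_map_base A g).trans ((Category.id_comp _).trans (Category.comp_id _)).symm

lemma mapRightAdjoint_map_fiber {Y Y' : Grothendieck G} (g : Y ⟶ Y') :
    ((mapRightAdjoint A).map g).fiber = eqToHom (by rw [mapRightAdjoint_map_base]; rfl) ≫
      (beckChevalley A g.base).app Y.fiber ≫ (R Y'.base).map g.fiber := by
  -- `𝕁.map g` is by construction the transpose of `ε_Y ≫ g`.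
  change mapFiberHomEquiv A (𝟙 Y.base ≫ g.base) ((R Y.base).obj Y.fiber) Y'.fiber
    (eqToHom (by simp) ≫ (G.map g.base).toFunctor.map
      ((mapFiberHomEquiv A (𝟙 Y.base) _ Y.fiber).symm (eqToHom (by simp))) ≫ g.fiber) = _
  rw [mapFiberHomEquiv_symm_eqToHom, mapFiberHomEquiv_congr_base A (Category.id_comp g.base)]
  simp only [Functor.map_comp, eqToHom_map, Category.assoc, eqToHom_trans_assoc, eqToHom_refl,
    Category.id_comp, mapFiberHomEquiv_map_counit_comp]
  rfl

lemma mapRightAdjoint_map_toTransport_fiber {i j : I} (y : G.obj i) (f : i ⟶ j) :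
    ((mapRightAdjoint A).map (toTransport ⟨i, y⟩ f)).fiber =
      eqToHom (by rw [mapRightAdjoint_map_base]; rfl) ≫ (beckChevalley A f).app y := by
  refine (mapRightAdjoint_map_fiber A _).trans ?_
  exact congrArg _ ((congrArg _ ((R j).map_id _)).trans (Category.comp_id _))

lemma isIso_mapRightAdjoint_map_toTransport_fiber_iff {i j : I} (f : i ⟶ j) :
    (∀ y : G.obj i, IsIso ((mapRightAdjoint A).map (toTransport ⟨i, y⟩ f)).fiber) ↔
      IsIso (beckChevalley A f).natTrans := by
  rw [NatTrans.isIso_iff_isIso_app]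
  refine forall_congr' fun y => ?_
  rw [mapRightAdjoint_map_toTransport_fiber]
  exact isIso_eqToHom_comp_iff _ _

end CategoryTheory.Grothendieck

/-- Let `η : F ⟶ G` be a natural transformation of functors `I ⥤ Cat`
whose components are left adjoints (with chosen right adjoints `R i`), and let
`𝕃 := Grothendieck.map η : ∫F ⥤ ∫G` be the induced functor over `I` between the
Grothendieck constructions.  Then `𝕃` admits a right adjoint `𝕁 : ∫G ⥤ ∫F` over `I`
(the unit and counit lie over identities of `I`), given fiberwise by the right adjoints
`R i`; moreover `𝕁` preserves cocartesian edges over `f : i ⟶ j` (i.e. the fiber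
components of the images of cocartesian lifts of `f` are invertible) if and only if the
naturality square of `η` at `f` is left adjointable, i.e. the Beck–Chevalley mate
`R i ⋙ F(f) ⟶ G(f) ⋙ R j` is an isomorphism. -/
theorem stmt_19 {I : Type u} [Category.{v} I] (F G : I ⥤ Cat.{v', u'})
    (η : F ⟶ G) (R : ∀ i : I, G.obj i ⥤ F.obj i)
    (A : ∀ i : I, (η.app i).toFunctor ⊣ R i) :
    ∃ (𝕁 : Grothendieck G ⥤ Grothendieck F)
      (hobj : ∀ X : Grothendieck G, 𝕁.obj X = ⟨X.base, (R X.base).obj X.fiber⟩)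
      (adj : Grothendieck.map η ⊣ 𝕁),
      𝕁 ⋙ Grothendieck.forget F = Grothendieck.forget G ∧
      (∀ x : Grothendieck F, (adj.unit.app x).base = eqToHom (by simp [hobj])) ∧
      (∀ y : Grothendieck G, (adj.counit.app y).base = eqToHom (by simp [hobj])) ∧
      (∀ {i j : I} (f : i ⟶ j),
        (∀ y : G.obj i,
          IsIso ((𝕁.map
            ({ base := f, fiber := 𝟙 ((G.map f).toFunctor.obj y) } :
              (⟨i, y⟩ : Grothendieck G) ⟶ ⟨j, (G.map f).toFunctor.obj y⟩)).fiber)) ↔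
        IsIso ((mateEquiv (A i) (A j))
          (eqToHom (congrArg Cat.Hom.toFunctor (η.naturality f) :
            (F.map f).toFunctor ⋙ (η.app j).toFunctor =
              (η.app i).toFunctor ⋙ (G.map f).toFunctor)))) :=
  ⟨Grothendieck.mapRightAdjoint A, fun _ => rfl, Grothendieck.mapAdjunction A,
    Grothendieck.mapRightAdjoint_comp_forget A, Grothendieck.mapAdjunction_unit_app_base A,
    Grothendieck.mapAdjunction_counit_app_base A,
    Grothendieck.isIso_mapRightAdjoint_map_toTransport_fiber_iff A⟩
end
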